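/- Let E be an admissible extension of a fuzzy argumentation framework FAF and let (A,a) be weakening defended by E, with S = SCC_FAF(A) the strongly connected component of A. Then (A,a) belongs to the defended part D_FAF(S,E), and (A,a) is weakening defended by E ∩ S in the restricted framework FAF↓_{R_FAF(S,E)}. -/

import Mathlib

open scoped Classical

noncomputable section

structure FAF (Args : Type) where
  arg : Args → ℝ
  atk : Args → Args → ℝ
  arg_mem : ∀ x, arg x ∈ Set.Icc (0:ℝ) 1
  atk_mem : ∀ x y, atk x y ∈ Set.Icc (0:ℝ) 1

namespace FAF

variable {Args : Type}

/-- fuzzy set inclusion: pointwise ≤ of membership degrees -/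
def incl (S T : Args → ℝ) : Prop := ∀ x, S x ≤ T x

/-- fuzzy set intersection: pointwise min -/
def inter (S T : Args → ℝ) : Args → ℝ := fun x => min (S x) (T x)

/-- an attack by an argument of degree `a`, along an attack of degree `ρ`, on an
argument of degree `b` is tolerable iff `min a ρ + b ≤ 1` (Gödel t-norm). -/
def Tolerable (a ρ b : ℝ) : Prop := min a ρ + b ≤ 1

/-- the result of weakening degree `b` by an attacker of degree `a` along `ρ`:
`b' = min (1 - min a ρ) b`. -/
def weaken (a ρ b : ℝ) : ℝ := min (1 - min a ρ) b

/-- `S` weakening defends the fuzzy argument `(x, c)` in `F`: for every `(B, 𝒜 B)` there is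
some `(A, S A)` weakening `(B, 𝒜 B)` to `(B, b')` such that `(B, b')` tolerably attacks `(x, c)`. -/
def Defends (F : FAF Args) (S : Args → ℝ) (x : Args) (c : ℝ) : Prop :=
  ∀ B : Args, ∃ A : Args,
    Tolerable (weaken (S A) (F.atk A B) (F.arg B)) (F.atk B x) c

/-- a fuzzy set is conflict-free iff all attacks between its elements are tolerable. -/
def ConflictFree (F : FAF Args) (E : Args → ℝ) : Prop :=
  ∀ A B : Args, Tolerable (E A) (F.atk A B) (E B)

/-- `E` is an admissible set in `C`: `E ⊆ C`, `E` conflict-free, and `E` weakening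
defends each of its elements. -/
def AdmissibleIn (F : FAF Args) (C E : Args → ℝ) : Prop :=
  (∀ x, 0 ≤ E x) ∧ incl E C ∧ F.ConflictFree E ∧ ∀ x, F.Defends E x (E x)

/-- the characteristic function of `F` in `C`: `S ↦ { (A,a) ∈ C ∣ S weakening defends (A,a) }`. -/
def charFun (F : FAF Args) (C S : Args → ℝ) : Args → ℝ :=
  fun x => sSup {c : ℝ | 0 ≤ c ∧ c ≤ C x ∧ F.Defends S x c}

/-- `E` is a complete extension in `C`: admissible in `C` and contains every fuzzy
argument of `C` that it weakening defends. -/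
def CompleteIn (F : FAF Args) (C E : Args → ℝ) : Prop :=
  F.AdmissibleIn C E ∧ ∀ x c, 0 ≤ c → c ≤ C x → F.Defends E x c → c ≤ E x

/-- `E` is a preferred extension in `C`: maximal (w.r.t. fuzzy set inclusion)
admissible set in `C`. -/
def PreferredIn (F : FAF Args) (C E : Args → ℝ) : Prop :=
  F.AdmissibleIn C E ∧ ∀ E', F.AdmissibleIn C E' → incl E E' → incl E' E

/-- `G` is the grounded extension of `F` in `C`: the least fixed point of the
characteristic function `F_{FAF,C}` among fuzzy subsets of `C`. -/
def IsGroundedIn (F : FAF Args) (C G : Args → ℝ) : Prop :=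
  (∀ x, 0 ≤ G x ∧ G x ≤ C x) ∧ F.charFun C G = G ∧
    ∀ G', (∀ x, 0 ≤ G' x ∧ G' x ≤ C x) → F.charFun C G' = G' → incl G G'

/-- an attack edge exists when the attack degree is positive -/
def Edge (F : FAF Args) (A B : Args) : Prop := 0 < F.atk A B

/-- path-equivalence: `A = B`, or there are chains of attacks from `A` to `B` and from `B` to `A`. -/
def PE (F : FAF Args) (A B : Args) : Prop :=
  A = B ∨ (Relation.TransGen F.Edge A B ∧ Relation.TransGen F.Edge B A)

/-- the strongly connected component of `A0`, as a fuzzy set (nodes with their belief degrees). -/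
def scc (F : FAF Args) (A0 : Args) : Args → ℝ :=
  fun B => if F.PE A0 B then F.arg B else 0

/-- the limited part `L_FAF(S,E)` of the SCC of `A0`:
`x ↦ max over (B, E B) outside the SCC attacking x of min (E B) (ρ B x)` (0 if none). -/
def limited (F : FAF Args) (A0 : Args) (E : Args → ℝ) : Args → ℝ :=
  fun x => sSup {v : ℝ | ∃ B : Args, ¬ F.PE A0 B ∧ F.Edge B x ∧ v = min (E B) (F.atk B x)}

/-- the residual part `R_FAF(S,E)`: each `x` in the SCC of `A0` gets degree
`min (𝒜 x) (1 - L_FAF(S,E) x)`. -/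
def residual (F : FAF Args) (A0 : Args) (E : Args → ℝ) : Args → ℝ :=
  fun x => if F.PE A0 x then min (F.arg x) (1 - F.limited A0 E x) else 0

/-- `(x,a)` is defended w.r.t. `E` against outside attackers: every `(B, 𝒜 B)` outside the SCC
of `A0` that sufficiently attacks `(x,a)` is weakened by some `(Cc, E Cc)` so that its attack
on `(x,a)` becomes tolerable. -/
def DefendedAt (F : FAF Args) (A0 : Args) (E : Args → ℝ) (x : Args) (a : ℝ) : Prop :=
  ∀ B : Args, ¬ F.PE A0 B → ¬ Tolerable (F.arg B) (F.atk B x) a →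
    ∃ Cc : Args, Tolerable (weaken (E Cc) (F.atk Cc B) (F.arg B)) (F.atk B x) a

/-- the defended part `D_FAF(S,E)` as a fuzzy set: the largest degree `a` below the residual
degree such that `(x,a)` is defended by `E` against all sufficient attackers from outside. -/
def defendedPart (F : FAF Args) (A0 : Args) (E : Args → ℝ) : Args → ℝ :=
  fun x => sSup {a : ℝ | 0 ≤ a ∧ a ≤ F.residual A0 E x ∧ F.DefendedAt A0 E x a}

/-- restriction `FAF↓_T` of `F` to a fuzzy set `T`: arguments get degrees of `T`,
attacks are kept within the support of `T`. -/
def restrict (F : FAF Args) (T : Args → ℝ) : FAF Args where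
  arg := fun x => max 0 (min 1 (T x))
  atk := fun x y => if 0 < T x ∧ 0 < T y then F.atk x y else 0
  arg_mem := fun x => ⟨le_max_left 0 _, max_le zero_le_one (min_le_left 1 _)⟩
  atk_mem := fun x y => by
    try dsimp only
    split
    · exact F.atk_mem x y
    · exact ⟨le_rfl, zero_le_one⟩

/-- the SCC of `A0` attacks the (distinct) SCC of `B0`. -/
def sccAttacks (F : FAF Args) (A0 B0 : Args) : Prop :=
  ¬ F.PE A0 B0 ∧ ∃ x y : Args, F.PE A0 x ∧ F.PE B0 y ∧ F.Edge x y

end FAF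


/-!
An outside attacker `B` of `A` is weakened by `E` enough to tolerate `(A, a)`; by conflict-freeness
`E B` lies below that weakened degree, so the limited part at `A` is at most `1 - a` and `(A, a)`
survives in the residual part. In the restriction to the residual part, an attacker `B` inside the
SCC is met with the defender `C` that `E` provides: if `C` lies in the SCC it still acts there, and
if it lies outside, its effect on `B` is already absorbed into the residual degree of `B`, so `B`
may serve as its own (idle) defender.
-/

namespace FAF

variable {Args : Type}

lemma weaken_le_weaken {a ρ b a' ρ' b' : ℝ} (h : min a' ρ' ≤ min a ρ) (hb : b ≤ b') :
    weaken a ρ b ≤ weaken a' ρ' b' :=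
  min_le_min (by linarith) hb

lemma Tolerable.mono_left {w w' ρ c : ℝ} (h : Tolerable w ρ c) (hw : w' ≤ w) :
    Tolerable w' ρ c := by
  unfold Tolerable at *
  linarith [min_le_min_right ρ hw]

lemma tolerable_zero {w c : ℝ} (hc : c ≤ 1) : Tolerable w 0 c := by
  unfold Tolerable
  linarith [min_le_right w 0]

variable {F : FAF Args} {A0 x : Args} {E : Args → ℝ} {c : ℝ}

lemma Defends.le_one (h : F.Defends E x c) : c ≤ 1 := by
  obtain ⟨C, hC⟩ := h x
  have hweak : 0 ≤ weaken (E C) (F.atk C x) (F.arg x) :=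
    le_min (by linarith [min_le_right (E C) (F.atk C x), (F.atk_mem C x).2]) (F.arg_mem x).1
  unfold Tolerable at hC
  linarith [le_min hweak (F.atk_mem x x).1]

lemma ConflictFree.le_weaken (hcf : F.ConflictFree E) (hE : incl E F.arg) (C B : Args) :
    E B ≤ weaken (E C) (F.atk C B) (F.arg B) :=
  le_min (by linarith [show min (E C) (F.atk C B) + E B ≤ 1 from hcf C B]) (hE B)

lemma bddAbove_limitedSet :
    BddAbove {v : ℝ | ∃ B, ¬ F.PE A0 B ∧ F.Edge B x ∧ v = min (E B) (F.atk B x)} := by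
  refine ⟨1, ?_⟩
  rintro v ⟨B, -, -, rfl⟩
  exact (min_le_right _ _).trans (F.atk_mem B x).2

lemma min_le_limited (hE0 : ∀ y, 0 ≤ E y) {C : Args} (hC : ¬ F.PE A0 C) :
    min (E C) (F.atk C x) ≤ F.limited A0 E x := by
  by_cases hedge : F.Edge C x
  · exact le_csSup bddAbove_limitedSet ⟨C, hC, hedge, rfl⟩
  · have hlim : 0 ≤ F.limited A0 E x := Real.sSup_nonneg <| by
      rintro v ⟨B, -, -, rfl⟩
      exact le_min (hE0 B) (F.atk_mem B x).1
    exact (min_le_right _ _).trans ((not_lt.mp hedge).trans hlim)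

lemma limited_le_of_defends (hcf : F.ConflictFree E) (hE : incl E F.arg)
    (hdef : F.Defends E x c) : F.limited A0 E x ≤ 1 - c := by
  refine Real.sSup_le ?_ (by linarith [hdef.le_one])
  rintro v ⟨B, -, -, rfl⟩
  obtain ⟨C, hC⟩ := hdef B
  unfold Tolerable at hC
  linarith [min_le_min_right (F.atk B x) (hcf.le_weaken hE C B)]

lemma residual_le_arg : F.residual A0 E x ≤ F.arg x := by
  unfold residual
  split
  · exact min_le_left _ _
  · exact (F.arg_mem x).1

lemma pe_of_residual_pos (h : 0 < F.residual A0 E x) : F.PE A0 x := by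
  by_contra hx
  simp only [residual, if_neg hx, lt_irrefl] at h

lemma le_residual (hx : F.PE A0 x) (hcf : F.ConflictFree E) (hE : incl E F.arg)
    (hdef : F.Defends E x c) (hc : c ≤ F.arg x) : c ≤ F.residual A0 E x := by
  rw [residual, if_pos hx]
  exact le_min hc (by linarith [limited_le_of_defends (A0 := A0) hcf hE hdef])

lemma Defends.le_defendedPart (hx : F.PE A0 x) (hcf : F.ConflictFree E) (hE : incl E F.arg)
    (hdef : F.Defends E x c) (hc0 : 0 ≤ c) (hc : c ≤ F.arg x) :
    c ≤ F.defendedPart A0 E x :=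
  le_csSup ⟨F.residual A0 E x, fun _ h => h.2.1⟩
    ⟨hc0, le_residual hx hcf hE hdef hc, fun B _ _ => hdef B⟩

lemma restrict_arg_le {T : Args → ℝ} (hx : 0 ≤ T x) : (F.restrict T).arg x ≤ T x :=
  max_le hx (min_le_right _ _)

lemma restrict_atk_of_pos {T : Args → ℝ} {y : Args} (hx : 0 < T x) (hy : 0 < T y) :
    (F.restrict T).atk x y = F.atk x y :=
  if_pos ⟨hx, hy⟩

lemma restrict_atk_of_not_pos {T : Args → ℝ} {y : Args} (h : ¬ (0 < T x ∧ 0 < T y)) :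
    (F.restrict T).atk x y = 0 :=
  if_neg h

lemma inter_scc_of_pe (hx : F.PE A0 x) (hE : incl E F.arg) : inter E (F.scc A0) x = E x := by
  rw [inter, scc, if_pos hx]
  exact min_eq_left (hE x)

lemma exists_restrict_weaken_le (hE : F.AdmissibleIn F.arg E) {B : Args}
    (hB : 0 < F.residual A0 E B) (C : Args) :
    ∃ C', weaken (inter E (F.scc A0) C') ((F.restrict (F.residual A0 E)).atk C' B)
        ((F.restrict (F.residual A0 E)).arg B) ≤ weaken (E C) (F.atk C B) (F.arg B) := by
  obtain ⟨hE0, hEarg, hcf, hEdef⟩ := hE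
  have hargB := (restrict_arg_le (F := F) hB.le).trans residual_le_arg
  by_cases hC : F.PE A0 C
  · refine ⟨C, ?_⟩
    rw [inter_scc_of_pe hC hEarg]
    refine weaken_le_weaken ?_ hargB
    by_cases hCpos : 0 < F.residual A0 E C
    · rw [restrict_atk_of_pos hCpos hB]
    · have hEC : E C ≤ 0 :=
        (le_residual hC hcf hEarg (hEdef C) (hEarg C)).trans (not_lt.mp hCpos)
      exact (min_le_left _ _).trans
        (hEC.trans (le_min (hE0 C) ((F.restrict (F.residual A0 E)).atk_mem C B).1))
  · refine ⟨B, (min_le_right _ _).trans ((restrict_arg_le hB.le).trans ?_)⟩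
    rw [residual, if_pos (pe_of_residual_pos hB), weaken, min_comm (1 - _)]
    exact min_le_min_left _ (by linarith [min_le_limited (x := B) hE0 hC])

lemma Defends.restrict_residual (hE : F.AdmissibleIn F.arg E) (hdef : F.Defends E x c) :
    (F.restrict (F.residual A0 E)).Defends (inter E (F.scc A0)) x c := by
  intro B
  by_cases hBx : 0 < F.residual A0 E B ∧ 0 < F.residual A0 E x
  · obtain ⟨C, hC⟩ := hdef B
    obtain ⟨C', hC'⟩ := exists_restrict_weaken_le hE hBx.1 C
    refine ⟨C', ?_⟩
    rw [restrict_atk_of_pos hBx.1 hBx.2]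
    exact hC.mono_left hC'
  · refine ⟨B, ?_⟩
    rw [restrict_atk_of_not_pos hBx]
    exact tolerable_zero hdef.le_one

end FAF

theorem defended_in_scc {Args : Type} (F : FAF Args) (E : Args → ℝ)
    (hE : F.AdmissibleIn F.arg E) (A : Args) (a : ℝ)
    (ha0 : 0 ≤ a) (haA : a ≤ F.arg A) (hdef : F.Defends E A a) :
    a ≤ F.defendedPart A E A ∧
      (F.restrict (F.residual A E)).Defends (FAF.inter E (F.scc A)) A a :=
  ⟨hdef.le_defendedPart (Or.inl rfl) hE.2.2.1 hE.2.1 ha0 haA, hdef.restrict_residual hE⟩
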